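/- arXiv:2511.08629 — 4 statements merged into one kernel-verified Lean document; each statement's English description precedes it below -/
import Mathlib

section
/- Let {p_k}, {q_k}, {α_k} be real sequences satisfying p_{k+1} ≤ (1 − q_k) p_k + α_k for all k, where 0 < q_k ≤ 1, Σ_{k=0}^∞ q_k = ∞, α_k ≥ 0, and lim_{k→∞} α_k / q_k = 0. Then limsup_{k→∞} p_k ≤ 0. -/
open Filter
open scoped Topology

/-- Lemma 2 of the paper.
If `p_{k+1} ≤ (1 − q_k) p_k + α_k` with `0 < q_k ≤ 1`, `∑ q_k = ∞`, `α_k ≥ 0`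
and `α_k / q_k → 0`, then `limsup p_k ≤ 0`. -/
theorem limsup_le_zero_of_contraction
    (p q α : ℕ → ℝ)
    (hrec : ∀ k, p (k + 1) ≤ (1 - q k) * p k + α k)
    (hqpos : ∀ k, 0 < q k) (hqle : ∀ k, q k ≤ 1)
    (hqdiv : Tendsto (fun n => ∑ k ∈ Finset.range n, q k) atTop atTop)
    (hα : ∀ k, 0 ≤ α k)
    (hlim : Tendsto (fun k => α k / q k) atTop (𝓝 0)) :
    Filter.limsup p atTop ≤ 0 := by
  have key : ∀ ε > (0:ℝ), ∀ᶠ k in atTop, p k ≤ ε := by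
    intro ε hε
    have hε2 : (0:ℝ) < ε/2 := by positivity
    obtain ⟨N, hN⟩ := (Metric.tendsto_atTop.mp hlim (ε/2) hε2)
    have hαq : ∀ k, N ≤ k → α k ≤ (ε/2) * q k := by
      intro k hk
      have h := hN k hk
      rw [Real.dist_eq, sub_zero,
        abs_of_nonneg (div_nonneg (hα k) (hqpos k).le)] at h
      have h2 : α k / q k ≤ ε/2 := h.le
      have hq := hqpos k
      calc α k = (α k / q k) * q k := by field_simp
        _ ≤ (ε/2) * q k := by nlinarith
    set M := max (p N - ε/2) 0 with hM
    have hM0 : 0 ≤ M := le_max_right _ _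
    have hbound : ∀ m, p (N + m) ≤ ε/2 + (∏ j ∈ Finset.range m, (1 - q (N + j))) * M := by
      intro m
      induction m with
      | zero =>
        simp only [Nat.add_zero, Finset.range_zero, Finset.prod_empty, one_mul, hM]
        have := le_max_left (p N - ε/2) 0
        linarith
      | succ m ih =>
        have hq' : 0 ≤ 1 - q (N+m) := by linarith [hqle (N+m)]
        have h1 := hrec (N + m)
        have hα' := hαq (N+m) (by omega)
        have hP : 0 ≤ ∏ j ∈ Finset.range m, (1 - q (N+j)) :=
          Finset.prod_nonneg fun j _ => by linarith [hqle (N+j)]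
        have heq : N + (m+1) = (N+m) + 1 := by omega
        rw [heq]
        calc p ((N+m)+1) ≤ (1 - q (N+m)) * p (N+m) + α (N+m) := h1
          _ ≤ (1 - q (N+m)) * (ε/2 + (∏ j ∈ Finset.range m, (1 - q (N+j))) * M)
              + (ε/2) * q (N+m) := by nlinarith
          _ = ε/2 + (∏ j ∈ Finset.range (m+1), (1 - q (N+j))) * M := by
              rw [Finset.prod_range_succ]; ring
    -- the product tends to 0
    have hS : Tendsto (fun m => ∑ j ∈ Finset.range m, q (N + j)) atTop atTop := by
      have := hqdiv.comp (tendsto_add_atTop_nat N)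
      have heq : ∀ m, ∑ j ∈ Finset.range m, q (N + j)
          = (∑ k ∈ Finset.range (m + N), q k) - ∑ k ∈ Finset.range N, q k := by
        intro m
        rw [add_comm m N, Finset.sum_range_add]
        ring
      simp only [heq]
      exact (this.atTop_add tendsto_const_nhds)
    have hexp : Tendsto (fun m => Real.exp (-(∑ j ∈ Finset.range m, q (N + j))) * M)
        atTop (𝓝 0) := by
      have h1 : Tendsto (fun m => Real.exp (-(∑ j ∈ Finset.range m, q (N + j))))
          atTop (𝓝 0) := Real.tendsto_exp_atBot.comp (tendsto_neg_atBot_iff.mpr hS)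
      have h2 := h1.mul_const M
      rwa [zero_mul] at h2
    have hprod : Tendsto (fun m => (∏ j ∈ Finset.range m, (1 - q (N+j))) * M)
        atTop (𝓝 0) := by
      apply tendsto_of_tendsto_of_tendsto_of_le_of_le (tendsto_const_nhds) hexp
      · intro m
        exact mul_nonneg (Finset.prod_nonneg fun j _ => by linarith [hqle (N+j)]) hM0
      · intro m
        apply mul_le_mul_of_nonneg_right _ hM0
        calc ∏ j ∈ Finset.range m, (1 - q (N+j))
            ≤ ∏ j ∈ Finset.range m, Real.exp (-(q (N+j))) := by
              apply Finset.prod_le_prod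
              · intro j _; linarith [hqle (N+j)]
              · intro j _
                have := Real.add_one_le_exp (-(q (N+j)))
                linarith
          _ = Real.exp (-(∑ j ∈ Finset.range m, q (N + j))) := by
              rw [← Real.exp_sum]; simp
    have hev : ∀ᶠ m in atTop, (∏ j ∈ Finset.range m, (1 - q (N+j))) * M ≤ ε/2 := by
      have := hprod.eventually (eventually_le_nhds (show (0:ℝ) < ε/2 from hε2))
      exact this
    obtain ⟨m0, hm0⟩ := eventually_atTop.mp hev
    rw [eventually_atTop]
    refine ⟨N + m0, fun k hk => ?_⟩
    have hk' : k = N + (k - N) := by omega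
    rw [hk']
    have := hbound (k - N)
    have := hm0 (k - N) (by omega)
    linarith
  rw [Filter.limsup_eq]
  by_cases hb : BddBelow {a | ∀ᶠ k in atTop, p k ≤ a}
  · refine le_of_forall_pos_le_add fun ε hε => ?_
    have := csInf_le hb (key ε hε)
    linarith
  · rw [Real.sInf_of_not_bddBelow hb]
end

section
/- Let 0 < b ≤ 1, a > 0, and k₀ ≥ 0 be an integer. Then for all sufficiently large l and all k ≥ l: if b = 1, then ∏_{i=l}^{k} (1 − a/(i+k₀)^b) ≤ ((l+k₀)/(k+k₀))^a; and if b ∈ (0,1), then ∏_{i=l}^{k} (1 − a/(i+k₀)^b) ≤ exp( (a/(1−b)) ((l+k₀)^{1−b} − (k+k₀+1)^{1−b}) ). -/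
open Filter Real

/-!
Once `(i + k₀) ^ b ≥ a`, every factor lies in `[0, 1]` and `1 - x ≤ exp (-x)` bounds the product by
`exp (-∑ a / (i + k₀) ^ b)`. By concavity, `a / n ^ b` dominates the increment `G (n + 1) - G n` of the
antiderivative `G = a log` (for `b = 1`) or `G = a n ^ (1 - b) / (1 - b)` (for `b < 1`), so the sum
telescopes.
-/

open Finset

namespace Real

theorem prod_one_sub_le_exp_neg_sum {ι : Type*} (s : Finset ι) {u : ι → ℝ}
    (hu : ∀ i ∈ s, u i ≤ 1) : ∏ i ∈ s, (1 - u i) ≤ exp (-∑ i ∈ s, u i) := by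
  rw [← sum_neg_distrib, exp_sum]
  exact prod_le_prod (fun i hi => sub_nonneg.mpr (hu i hi)) fun i _ => one_sub_le_exp_neg _

theorem prod_Icc_one_sub_le_exp_sub {u g : ℕ → ℝ} {l k : ℕ} (hlk : l ≤ k)
    (hu : ∀ i ∈ Icc l k, u i ≤ 1) (hg : ∀ i ∈ Icc l k, g (i + 1) - g i ≤ u i) :
    ∏ i ∈ Icc l k, (1 - u i) ≤ exp (g l - g (k + 1)) := by
  calc ∏ i ∈ Icc l k, (1 - u i) ≤ exp (-∑ i ∈ Icc l k, u i) := prod_one_sub_le_exp_neg_sum _ hu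
    _ ≤ exp (-∑ i ∈ Icc l k, (g (i + 1) - g i)) := by gcongr with i hi; exact hg i hi
    _ = exp (g l - g (k + 1)) := by rw [sum_Icc_sub hlk]; ring_nf

theorem log_add_one_sub_log_le {x : ℝ} (hx : 0 < x) : log (x + 1) - log x ≤ 1 / x := by
  rw [← log_div (by positivity) hx.ne']
  calc log ((x + 1) / x) ≤ (x + 1) / x - 1 := log_le_sub_one_of_pos (by positivity)
    _ = 1 / x := by field_simp; ring

theorem rpow_add_one_sub_rpow_le {x p : ℝ} (hx : 0 < x) (hp0 : 0 ≤ p) (hp1 : p ≤ 1) :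
    (x + 1) ^ p - x ^ p ≤ p * x ^ (p - 1) := by
  have hbern : (1 + 1 / x) ^ p ≤ 1 + p * (1 / x) :=
    rpow_one_add_le_one_add_mul_self (by linarith [one_div_pos.mpr hx]) hp0 hp1
  have hsplit : (x + 1) ^ p = x ^ p * (1 + 1 / x) ^ p := by
    rw [← mul_rpow hx.le (by positivity)]; congr 1; field_simp
  rw [hsplit]
  calc x ^ p * (1 + 1 / x) ^ p - x ^ p ≤ x ^ p * (1 + p * (1 / x)) - x ^ p := by
        gcongr
    _ = p * x ^ (p - 1) := by rw [rpow_sub_one hx.ne']; ring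

theorem exists_forall_ge_pos_and_le_rpow (a : ℝ) {b : ℝ} (hb : 0 < b) :
    ∃ L : ℕ, ∀ n ≥ L, 0 < (n : ℝ) ∧ a ≤ (n : ℝ) ^ b := by
  have hlarge := ((tendsto_rpow_atTop hb).comp tendsto_natCast_atTop_atTop).eventually_ge_atTop a
  obtain ⟨L, hL⟩ := (hlarge.and (eventually_gt_atTop 0)).exists_forall_of_atTop
  exact ⟨L, fun n hn => ⟨by exact_mod_cast (hL n hn).2, (hL n hn).1⟩⟩

theorem mul_log_add_one_sub_le {a x : ℝ} (ha : 0 ≤ a) (hx : 0 < x) :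
    a * log (x + 1) - a * log x ≤ a / x := by
  rw [← mul_sub, ← mul_one_div]
  exact mul_le_mul_of_nonneg_left (log_add_one_sub_log_le hx) ha

theorem div_mul_rpow_add_one_sub_le {a b x : ℝ} (ha : 0 ≤ a) (hb0 : 0 ≤ b) (hb1 : b < 1)
    (hx : 0 < x) : a / (1 - b) * (x + 1) ^ (1 - b) - a / (1 - b) * x ^ (1 - b) ≤ a / x ^ b := by
  have hb : 0 < 1 - b := by linarith
  calc a / (1 - b) * (x + 1) ^ (1 - b) - a / (1 - b) * x ^ (1 - b)
      ≤ a / (1 - b) * ((1 - b) * x ^ (1 - b - 1)) := by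
        rw [← mul_sub]; gcongr; exact rpow_add_one_sub_rpow_le hx hb.le (by linarith)
    _ = a / x ^ b := by rw [sub_sub_cancel_left, rpow_neg hx.le]; field_simp

theorem exp_mul_log_sub_mul_log_le {a x y : ℝ} (ha : 0 ≤ a) (hx : 0 < x) (hy : 0 < y) :
    exp (a * log x - a * log (y + 1)) ≤ (x / y) ^ a := by
  rw [← mul_sub, ← log_div hx.ne' (by positivity), mul_comm, ← rpow_def_of_pos (by positivity)]
  gcongr
  linarith

end Real

theorem prod_one_sub_bound_general
    (a : ℝ) (ha : 0 < a) (b : ℝ) (hb0 : 0 < b) (k₀ : ℕ) :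
    ∃ L : ℕ, ∀ l ≥ L, ∀ k ≥ l,
      (b = 1 →
        ∏ i ∈ Finset.Icc l k, (1 - a / ((i : ℝ) + k₀) ^ b) ≤
          (((l : ℝ) + k₀) / ((k : ℝ) + k₀)) ^ a) ∧
      (b < 1 →
        ∏ i ∈ Finset.Icc l k, (1 - a / ((i : ℝ) + k₀) ^ b) ≤
          Real.exp (a / (1 - b) *
            (((l : ℝ) + k₀) ^ (1 - b) - ((k : ℝ) + k₀ + 1) ^ (1 - b)))) := by
  obtain ⟨L, hL⟩ := Real.exists_forall_ge_pos_and_le_rpow a hb0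
  refine ⟨L, fun l hl k hk => ?_⟩
  have hpos_le : ∀ i ≥ l, 0 < (i : ℝ) + k₀ ∧ a ≤ ((i : ℝ) + k₀) ^ b := fun i hi => by
    exact_mod_cast hL (i + k₀) (by omega)
  have hpos : ∀ i ∈ Icc l k, 0 < (i : ℝ) + k₀ := fun i hi => (hpos_le i (mem_Icc.1 hi).1).1
  have hu : ∀ i ∈ Icc l k, a / ((i : ℝ) + k₀) ^ b ≤ 1 := fun i hi =>
    div_le_one_of_le₀ (hpos_le i (mem_Icc.1 hi).1).2 (by positivity [hpos i hi])
  have hshift : ∀ i : ℕ, ((i + 1 : ℕ) : ℝ) + k₀ = (i : ℝ) + k₀ + 1 := fun i => by push_cast; ring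
  refine ⟨fun hb => ?_, fun hb => ?_⟩
  · subst hb
    calc _ ≤ exp (a * log ((l : ℝ) + k₀) - a * log (((k + 1 : ℕ) : ℝ) + k₀)) :=
          prod_Icc_one_sub_le_exp_sub (g := fun i => a * log ((i : ℝ) + k₀)) hk hu
            fun i hi => by
              simpa only [hshift, rpow_one] using mul_log_add_one_sub_le ha.le (hpos i hi)
      _ ≤ _ := by
          rw [hshift]
          exact exp_mul_log_sub_mul_log_le ha.le (hpos l (left_mem_Icc.2 hk))
            (hpos k (right_mem_Icc.2 hk))
  · calc _ ≤ exp (a / (1 - b) * ((l : ℝ) + k₀) ^ (1 - b)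
              - a / (1 - b) * (((k + 1 : ℕ) : ℝ) + k₀) ^ (1 - b)) :=
          prod_Icc_one_sub_le_exp_sub (g := fun i => a / (1 - b) * ((i : ℝ) + k₀) ^ (1 - b)) hk hu
            fun i hi => by
              simpa only [hshift] using div_mul_rpow_add_one_sub_le ha.le hb0.le hb (hpos i hi)
      _ = _ := by rw [hshift, mul_sub]

/-- Lemma 3, first part, of the paper.
For `0 < b ≤ 1`, `a > 0` and an integer `k₀ ≥ 0`, for all sufficiently large `l` and
all `k ≥ l`: if `b = 1` then `∏_{i=l}^k (1 − a/(i+k₀)^b) ≤ ((l+k₀)/(k+k₀))^a`, and if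
`b < 1` then `∏_{i=l}^k (1 − a/(i+k₀)^b) ≤ exp((a/(1−b))((l+k₀)^{1−b} − (k+k₀+1)^{1−b}))`. -/
theorem prod_one_sub_bound
    (a : ℝ) (ha : 0 < a) (b : ℝ) (hb0 : 0 < b) (hb1 : b ≤ 1) (k₀ : ℕ) :
    ∃ L : ℕ, ∀ l ≥ L, ∀ k ≥ l,
      (b = 1 →
        ∏ i ∈ Finset.Icc l k, (1 - a / ((i : ℝ) + k₀) ^ b) ≤
          (((l : ℝ) + k₀) / ((k : ℝ) + k₀)) ^ a) ∧
      (b < 1 →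
        ∏ i ∈ Finset.Icc l k, (1 - a / ((i : ℝ) + k₀) ^ b) ≤
          Real.exp (a / (1 - b) *
            (((l : ℝ) + k₀) ^ (1 - b) - ((k : ℝ) + k₀ + 1) ^ (1 - b)))) :=
  prod_one_sub_bound_general a ha b hb0 k₀
end

section
/- Let b ∈ (0,1), a > 0, k₀ ≥ 0 an integer, and let {c_l} be a real sequence with |c_l| ≤ C₀/(l+k₀)^{2b} for some constant C₀ and all l ≥ 1. Then Σ_{l=1}^{k} ( ∏_{i=l}^{k} (1 − a/(i+k₀)^b) ) · c_l = O(1/k^b); that is, there exists a constant C such that | Σ_{l=1}^{k} ( ∏_{i=l}^{k} (1 − a/(i+k₀)^b) ) c_l | ≤ C/k^b for all sufficiently large k. -/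
open Filter Real Finset

/-!
With `γ i = a / (i + k₀) ^ b`, the sum `S k` obeys `S (k + 1) = (1 - γ (k + 1)) * (S k + c (k + 1))`,
so by induction it suffices that `C / k ^ b` is eventually a supersolution of this recursion for
every large `C`. Since `(k + 1) ^ b ≤ k ^ b * (1 + 1 / k)` and `γ (k + 1) ≥ A / (k + 1) ^ b` with
`A = a / (1 + k₀) ^ b`, the damping removes a fraction `A / (k + 1) ^ b` of `C / k ^ b`. For `b < 1`
half of it eventually beats the loss `1 / k`, and the other half absorbs
`|c (k + 1)| ≤ C₀ / (k + 1) ^ (2 * b)` as soon as `C ≥ 2 * C₀ / A`.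
-/

def dampedSum {R : Type*} [CommRing R] (γ c : ℕ → R) (k : ℕ) : R :=
  ∑ l ∈ Icc 1 k, (∏ i ∈ Icc l k, (1 - γ i)) * c l

lemma dampedSum_succ {R : Type*} [CommRing R] (γ c : ℕ → R) (k : ℕ) :
    dampedSum γ c (k + 1) = (1 - γ (k + 1)) * (dampedSum γ c k + c (k + 1)) := by
  rw [dampedSum, sum_Icc_succ_top (by omega), Icc_self, prod_singleton, dampedSum, mul_add,
    mul_sum]
  congr 1
  refine sum_congr rfl fun l hl => ?_
  rw [prod_Icc_succ_top (by simp only [mem_Icc] at hl; omega)]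
  ring

lemma exists_abs_dampedSum_le_div {γ c w : ℕ → ℝ} {C₁ : ℝ} {N : ℕ} (hw : 0 < w N)
    (hγ : ∀ k ≥ N, γ (k + 1) ≤ 1)
    (hstep : ∀ C ≥ C₁, ∀ k ≥ N, (1 - γ (k + 1)) * (C / w k + |c (k + 1)|) ≤ C / w (k + 1)) :
    ∃ C, ∀ k ≥ N, |dampedSum γ c k| ≤ C / w k := by
  set C := max C₁ (|dampedSum γ c N| * w N)
  refine ⟨C, fun k hk => ?_⟩
  induction k, hk using Nat.le_induction with
  | base => rw [le_div_iff₀ hw]; exact le_max_right _ _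
  | succ k hk ih =>
    have hγk : 0 ≤ 1 - γ (k + 1) := sub_nonneg.2 (hγ k hk)
    calc |dampedSum γ c (k + 1)| = (1 - γ (k + 1)) * |dampedSum γ c k + c (k + 1)| := by
          rw [dampedSum_succ, abs_mul, abs_of_nonneg hγk]
      _ ≤ (1 - γ (k + 1)) * (C / w k + |c (k + 1)|) := by
          gcongr
          exact (abs_add_le _ _).trans (by gcongr)
      _ ≤ C / w (k + 1) := hstep C (le_max_left _ _) k hk

lemma one_sub_mul_div_add_le_div {γ A u w x C C₀ d : ℝ} (hx : 0 < x) (hu : 0 < u)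
    (hw : 0 < w) (hC : 0 ≤ C) (hd : 0 ≤ d) (hγ : γ ≤ 1) (hAγ : A / u ≤ γ)
    (huw : u ≤ w * (1 + 1 / x)) (hux : 2 * u ≤ A * x) (hC₀ : C₀ ≤ C * A / 2)
    (hdu : d ≤ C₀ / u ^ 2) :
    (1 - γ) * (C / w + d) ≤ C / u := by
  have hA : 0 ≤ A := by nlinarith
  have hγ0 : 0 ≤ γ := (div_nonneg hA hu.le).trans hAγ
  have hCw : C / w ≤ C / u * (1 + 1 / x) := by
    rw [div_mul_eq_mul_div, div_le_div_iff₀ hw hu]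
    nlinarith [mul_le_mul_of_nonneg_left huw hC]
  have hxu : 1 / x ≤ A / u / 2 := by
    rw [div_le_iff₀ hx]; field_simp; linarith
  have hdC : d ≤ C / u * (A / u / 2) := by
    calc d ≤ C₀ / u ^ 2 := hdu
      _ ≤ (C * A / 2) / u ^ 2 := by gcongr
      _ = C / u * (A / u / 2) := by field_simp
  have hCu : 0 ≤ C / u := by positivity
  calc (1 - γ) * (C / w + d) ≤ C / u * ((1 - γ) * (1 + 1 / x)) + d := by
        nlinarith [mul_le_mul_of_nonneg_left hCw (sub_nonneg.2 hγ)]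
    _ ≤ C / u * (1 - A / u / 2) + C / u * (A / u / 2) := by
        refine add_le_add (mul_le_mul_of_nonneg_left ?_ hCu) hdC
        nlinarith [mul_nonneg hγ0 (one_div_pos.2 hx).le]
    _ = C / u := by ring

lemma rpow_add_one_le_mul {x b : ℝ} (hx : 0 < x) (hb : b ≤ 1) :
    (x + 1) ^ b ≤ x ^ b * (1 + 1 / x) := by
  have hsplit : (x + 1) ^ b = x ^ b * (1 + 1 / x) ^ b := by
    rw [← mul_rpow hx.le (by positivity)]
    congr 1
    field_simp
  rw [hsplit]
  gcongr
  exact rpow_le_self_of_one_le (by simp [hx.le]) hb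

lemma div_rpow_le_div_add_rpow {a b x κ : ℝ} (ha : 0 ≤ a) (hb : 0 ≤ b) (hx : 0 ≤ x)
    (hκ : 0 ≤ κ) : a / (1 + κ) ^ b / (x + 1) ^ b ≤ a / (x + 1 + κ) ^ b := by
  rw [div_div, ← mul_rpow (by positivity) (by positivity)]
  gcongr
  nlinarith

lemma eventually_two_mul_rpow_add_one_le {A b : ℝ} (hA : 0 < A) (hb : b < 1) :
    ∀ᶠ x : ℝ in atTop, 2 * (x + 1) ^ b ≤ A * x := by
  filter_upwards [eventually_ge_atTop 1,
    (tendsto_rpow_atTop (sub_pos.2 hb)).eventually_ge_atTop (4 / A)] with x hx1 hx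
  have hx0 : 0 < x := by linarith
  calc 2 * (x + 1) ^ b ≤ 2 * (x ^ b * (1 + 1 / x)) := by
        gcongr; exact rpow_add_one_le_mul hx0 hb.le
    _ ≤ 2 * (x ^ b * 2) := by
        gcongr; linarith [(div_le_one hx0).2 hx1]
    _ = 4 / A * x ^ b * A := by field_simp; ring
    _ ≤ x ^ (1 - b) * x ^ b * A := by gcongr
    _ = A * x := by rw [← rpow_add hx0]; simp [mul_comm]

lemma one_sub_div_rpow_mul_le {a b κ x C C₀ d : ℝ} (ha : 0 < a) (hb0 : 0 ≤ b) (hb1 : b ≤ 1)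
    (hκ : 0 ≤ κ) (hx : 0 < x) (hγ : a ≤ (x + 1 + κ) ^ b)
    (hux : 2 * (x + 1) ^ b ≤ a / (1 + κ) ^ b * x)
    (hC₀ : C₀ ≤ C * (a / (1 + κ) ^ b) / 2) (hd0 : 0 ≤ d)
    (hd : d ≤ C₀ / (x + 1 + κ) ^ (2 * b)) :
    (1 - a / (x + 1 + κ) ^ b) * (C / x ^ b + d) ≤ C / (x + 1) ^ b := by
  have hC₀0 : 0 ≤ C₀ := by
    by_contra! h
    linarith [div_neg_of_neg_of_pos h (by positivity : (0:ℝ) < (x + 1 + κ) ^ (2 * b))]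
  have hC : 0 ≤ C := by
    by_contra! h
    nlinarith [mul_neg_of_neg_of_pos h (by positivity : 0 < a / (1 + κ) ^ b)]
  have hsq : ((x + 1) ^ b) ^ 2 = (x + 1) ^ (2 * b) := by
    rw [← rpow_natCast, ← rpow_mul (by positivity), Nat.cast_ofNat, mul_comm]
  refine one_sub_mul_div_add_le_div hx (by positivity) (by positivity) hC hd0
    ((div_le_one (by positivity)).2 hγ) (div_rpow_le_div_add_rpow ha.le hb0 hx.le hκ)
    (rpow_add_one_le_mul hx hb1) hux hC₀ (hd.trans ?_)
  rw [hsq]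
  exact div_le_div_of_nonneg_left hC₀0 (by positivity)
    (rpow_le_rpow (by positivity) (by linarith) (by positivity))

/-- Lemma 3, second part, of the paper.
For `b ∈ (0,1)`, `a > 0`, an integer `k₀ ≥ 0` and a sequence `c_l` with
`|c_l| ≤ C₀/(l+k₀)^{2b}`, the weighted sum
`∑_{l=1}^k (∏_{i=l}^k (1 − a/(i+k₀)^b)) c_l` is `O(1/k^b)`. -/
theorem sum_prod_one_sub_bound
    (a b : ℝ) (ha : 0 < a) (hb0 : 0 < b) (hb1 : b < 1) (k₀ : ℕ)
    (c : ℕ → ℝ) (C₀ : ℝ)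
    (hc : ∀ l : ℕ, 1 ≤ l → |c l| ≤ C₀ / ((l : ℝ) + k₀) ^ (2 * b)) :
    ∃ C : ℝ, ∃ N : ℕ, ∀ k ≥ N,
      |∑ l ∈ Finset.Icc 1 k,
          (∏ i ∈ Finset.Icc l k, (1 - a / ((i : ℝ) + k₀) ^ b)) * c l| ≤
        C / (k : ℝ) ^ b := by
  set A := a / (1 + (k₀ : ℝ)) ^ b
  have hA : 0 < A := by positivity
  have hγ : ∀ᶠ x : ℝ in atTop, a ≤ (x + 1 + k₀) ^ b :=
    ((tendsto_rpow_atTop hb0).comp <| tendsto_atTop_add_const_right _ _ <|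
      tendsto_atTop_add_const_right _ _ tendsto_id).eventually_ge_atTop a
  obtain ⟨N, hN⟩ := eventually_atTop.1 <| (eventually_ge_atTop 1).and <|
    tendsto_natCast_atTop_atTop.eventually (hγ.and (eventually_two_mul_rpow_add_one_le hA hb1))
  refine (exists_abs_dampedSum_le_div (w := fun k => (k : ℝ) ^ b) (C₁ := 2 * C₀ / A)
    (rpow_pos_of_pos (by exact_mod_cast (hN N le_rfl).1) b) ?_ ?_).imp fun C hC => ⟨N, hC⟩
  · intro k hk
    push_cast
    exact (div_le_one (by positivity)).2 (hN k hk).2.1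
  · intro C hC k hk
    obtain ⟨hk1, hγk, hux⟩ := hN k hk
    push_cast
    refine one_sub_div_rpow_mul_le ha hb0.le hb1.le k₀.cast_nonneg (by positivity) hγk hux
      ?_ (abs_nonneg _) (by exact_mod_cast hc (k + 1) (by omega))
    linarith [(div_le_iff₀ hA).1 hC]
end

section
/- For the GRP-TB-KP innovation s̃_{k+1} = β(1−(p+q))·((1−(p+q))F_k(C − θ̂_kᵀφ_k) + q − s_{k+1}) with θ̂_k being F_k-measurable, the conditional expectation satisfies, almost surely, E[s̃_{k+1} | F_k] = β(1 − p − q)² ( F_k(C − φ_kᵀθ̂_k) − F_k(C − φ_kᵀθ) ). -/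
/-!
Since `F_k` is deterministic, the events `{w_{k+1} ≤ x}` are independent of `ℱ_k`, and `F_k` is
the distribution function of `w_{k+1}`. As `s⁰_{k+1} = 1{w_{k+1} ≤ C - φ_kᵀθ}` with `φ_k`
`ℱ_k`-measurable, the freezing lemma gives `E[s⁰_{k+1} | ℱ_k] = F_k(C - φ_kᵀθ)`. Writing
`s = s⁰ - 1{s = 0} s⁰ + s (1 - s⁰)`, the two tampering rates give
`E[s_{k+1} | ℱ_k] = (1 - p - q) E[s⁰_{k+1} | ℱ_k] + q`, and the innovation is an
`ℱ_k`-measurable term minus `β(1 - p - q) s_{k+1}`.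
-/

open MeasureTheory Filter Real ProbabilityTheory
open scoped RealInnerProductSpace Topology

section Freezing

variable {Ω β γ : Type*} {m m0 : MeasurableSpace Ω} {μ : Measure Ω}
  [MeasurableSpace β] [MeasurableSpace γ] {X : Ω → β} {Y : Ω → γ}

theorem ProbabilityTheory.IndepFun.integral_comp_prod [IsFiniteMeasure μ] (hXY : IndepFun X Y μ)
    (hX : Measurable X) (hY : Measurable Y) {f : β × γ → ℝ} (hf : StronglyMeasurable f)
    (hfi : Integrable (fun ω => f (X ω, Y ω)) μ) :
    ∫ ω, f (X ω, Y ω) ∂μ = ∫ ω, ∫ ω', f (X ω, Y ω') ∂μ ∂μ := by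
  have hmap := hXY.map_prod_eq_prod_map_map hX.aemeasurable hY.aemeasurable
  have hfi' : Integrable f ((μ.map X).prod (μ.map Y)) := by
    rw [← hmap]
    exact (integrable_map_measure hf.aestronglyMeasurable (hX.prodMk hY).aemeasurable).2 hfi
  calc ∫ ω, f (X ω, Y ω) ∂μ = ∫ z, f z ∂(μ.map fun ω => (X ω, Y ω)) :=
        (integral_map (hX.prodMk hY).aemeasurable hf.aestronglyMeasurable).symm
    _ = ∫ x, ∫ y, f (x, y) ∂(μ.map Y) ∂(μ.map X) := by rw [hmap, integral_prod _ hfi']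
    _ = ∫ ω, ∫ y, f (X ω, y) ∂(μ.map Y) ∂μ :=
        integral_map hX.aemeasurable hfi'.integral_prod_left.aestronglyMeasurable
    _ = ∫ ω, ∫ ω', f (X ω, Y ω') ∂μ ∂μ := by
        congr 1 with ω
        exact integral_map hY.aemeasurable
          (hf.comp_measurable (measurable_const.prodMk measurable_id)).aestronglyMeasurable

theorem Set.indicator_eq_indicator_one_mul {α M₀ : Type*} [MulZeroOneClass M₀] (A : Set α)
    (h : α → M₀) :
    A.indicator h = fun x => A.indicator 1 x * h x := by
  ext x
  simpa using Set.indicator_mul_left A 1 h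

theorem setIntegral_eq_integral_indicator_one_mul {A : Set Ω} (hA : MeasurableSet A)
    (h : Ω → ℝ) : ∫ ω in A, h ω ∂μ = ∫ ω, A.indicator 1 ω * h ω ∂μ := by
  rw [← integral_indicator hA, A.indicator_eq_indicator_one_mul]

/- The freezing lemma. For `A ∈ m` the pair `(X, 1_A)` is still independent of `Y`, which turns
`∫_A f(X, Y)` into an integral against the product of the laws. -/
theorem condExp_comp_prod_ae_eq_of_indep [IsProbabilityMeasure μ] (hm : m ≤ m0)
    (hX : Measurable[m] X) (hY : Measurable Y) (hind : Indep m (MeasurableSpace.comap Y ‹_›) μ)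
    {f : β × γ → ℝ} (hf : StronglyMeasurable f) {M : ℝ} (hfM : ∀ z, ‖f z‖ ≤ M) :
    μ[fun ω => f (X ω, Y ω) | m] =ᵐ[μ] fun ω => ∫ ω', f (X ω, Y ω') ∂μ := by
  have hX0 : Measurable X := hX.mono hm le_rfl
  have hfXY : Integrable (fun ω => f (X ω, Y ω)) μ :=
    .of_bound (hf.comp_measurable (hX0.prodMk hY)).aestronglyMeasurable M
      (ae_of_all _ fun _ => hfM _)
  have hfrozen : StronglyMeasurable[m] fun ω => ∫ ω', f (X ω, Y ω') ∂μ :=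
    (hf.comp_measurable (measurable_fst.prodMk (hY.comp measurable_snd))).integral_prod_right'
      |>.comp_measurable hX
  have hfrozen_int : Integrable (fun ω => ∫ ω', f (X ω, Y ω') ∂μ) μ := by
    refine .of_bound (hfrozen.mono hm).aestronglyMeasurable M (ae_of_all _ fun ω => ?_)
    simpa using norm_integral_le_of_norm_le_const (μ := μ) (ae_of_all _ fun ω' => hfM (X ω, Y ω'))
  refine (ae_eq_condExp_of_forall_setIntegral_eq hm hfXY (fun _ _ _ => hfrozen_int.integrableOn)
    (fun A hA _ => ?_) hfrozen.aestronglyMeasurable).symm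
  set Z : Ω → β × ℝ := fun ω => (X ω, A.indicator 1 ω)
  have hZ : Measurable[m] Z := hX.prodMk (measurable_const.indicator hA)
  have hZY : IndepFun Z Y μ := indep_of_indep_of_le_left hind hZ.comap_le
  have hg : StronglyMeasurable fun z : (β × ℝ) × γ => z.1.2 * f (z.1.1, z.2) :=
    (measurable_fst.snd.stronglyMeasurable).mul
      (hf.comp_measurable (measurable_fst.fst.prodMk measurable_snd))
  calc ∫ ω in A, ∫ ω', f (X ω, Y ω') ∂μ ∂μ
      = ∫ ω, ∫ ω', (Z ω).2 * f ((Z ω).1, Y ω') ∂μ ∂μ := by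
        simp only [setIntegral_eq_integral_indicator_one_mul (hm _ hA), integral_const_mul, Z]
    _ = ∫ ω, (Z ω).2 * f ((Z ω).1, Y ω) ∂μ := by
        refine (hZY.integral_comp_prod (hZ.mono hm le_rfl) hY hg ?_).symm
        have := hfXY.indicator (hm _ hA)
        rwa [A.indicator_eq_indicator_one_mul] at this
    _ = ∫ ω in A, f (X ω, Y ω) ∂μ := (setIntegral_eq_integral_indicator_one_mul (hm _ hA) _).symm

end Freezing

section DistributionFunction

variable {Ω : Type*} {m m0 : MeasurableSpace Ω} {μ : Measure Ω}

theorem integral_eq_of_condExp_ae_eq_const [IsProbabilityMeasure μ] (hm : m ≤ m0) {f : Ω → ℝ}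
    {c : ℝ} (h : μ[f | m] =ᵐ[μ] fun _ => c) : ∫ ω, f ω ∂μ = c := by
  rw [← integral_condExp hm, integral_congr_ae h, integral_const, probReal_univ, one_smul]

theorem integrable_ite_le [IsFiniteMeasure μ] {X Y : Ω → ℝ} (hX : Measurable X)
    (hY : Measurable Y) : Integrable (fun ω => if Y ω ≤ X ω then (1 : ℝ) else 0) μ :=
  .of_bound (Measurable.ite (measurableSet_le hY hX) measurable_const
    measurable_const).aestronglyMeasurable 1 (ae_of_all _ fun _ => by split_ifs <;> simp)

theorem ite_le_eq_indicator_preimage_Iic (Y : Ω → ℝ) (x : ℝ) :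
    (fun ω => if Y ω ≤ x then (1 : ℝ) else 0) = (Y ⁻¹' Set.Iic x).indicator 1 := by
  funext ω
  by_cases h : Y ω ≤ x <;> simp [h]

theorem integral_ite_le_eq_cdf_map [IsProbabilityMeasure μ] {Y : Ω → ℝ} (hY : Measurable Y)
    (x : ℝ) : ∫ ω, (if Y ω ≤ x then (1 : ℝ) else 0) ∂μ = cdf (μ.map Y) x := by
  have := Measure.isProbabilityMeasure_map (μ := μ) hY.aemeasurable
  rw [cdf_eq_real, map_measureReal_apply hY measurableSet_Iic, ite_le_eq_indicator_preimage_Iic,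
    integral_indicator_one (hY measurableSet_Iic)]

theorem indep_comap_of_condExp_ite_le_ae_eq_const [IsProbabilityMeasure μ] (hm : m ≤ m0)
    {Y : Ω → ℝ} (hY : Measurable Y) {c : ℝ → ℝ}
    (h : ∀ x, μ[fun ω => if Y ω ≤ x then (1 : ℝ) else 0 | m] =ᵐ[μ] fun _ => c x) :
    Indep m (MeasurableSpace.comap Y inferInstance) μ := by
  refine IndepSets.indep hm hY.comap_le (@MeasurableSpace.isPiSystem_measurableSet Ω m)
    (isPiSystem_Iic.comap Y) (@MeasurableSpace.generateFrom_measurableSet Ω m).symm ?_ ?_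
  · rw [BorelSpace.measurable_eq (α := ℝ), borel_eq_generateFrom_Iic,
      MeasurableSpace.comap_generateFrom]
    rfl
  rw [IndepSets_iff]
  rintro A _ hA ⟨_, ⟨x, rfl⟩, rfl⟩
  have hB : MeasurableSet (Y ⁻¹' Set.Iic x) := hY measurableSet_Iic
  have hcondExp : ∀ A, MeasurableSet[m] A → μ.real (A ∩ Y ⁻¹' Set.Iic x) = c x * μ.real A := by
    intro A hA
    calc μ.real (A ∩ Y ⁻¹' Set.Iic x) = ∫ ω in A, (if Y ω ≤ x then (1 : ℝ) else 0) ∂μ := by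
          rw [ite_le_eq_indicator_preimage_Iic, integral_indicator_one hB,
            measureReal_restrict_apply hB, Set.inter_comm]
      _ = ∫ ω in A, (μ[fun ω => if Y ω ≤ x then (1 : ℝ) else 0 | m]) ω ∂μ :=
          (setIntegral_condExp hm (integrable_ite_le measurable_const hY) hA).symm
      _ = c x * μ.real A := by
          rw [setIntegral_congr_ae (hm _ hA) ((h x).mono fun _ h _ => h), setIntegral_const,
            smul_eq_mul, mul_comm]
  have hc : c x = μ.real (Y ⁻¹' Set.Iic x) := by
    simpa using (hcondExp _ MeasurableSet.univ).symm
  rw [← ENNReal.toReal_eq_toReal_iff' (measure_ne_top _ _)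
    (ENNReal.mul_ne_top (measure_ne_top _ _) (measure_ne_top _ _)), ENNReal.toReal_mul,
    ← measureReal_def, ← measureReal_def, ← measureReal_def, hcondExp A hA, hc, mul_comm]

theorem condExp_ite_le_ae_eq_cdf_map [IsProbabilityMeasure μ] (hm : m ≤ m0) {X Y : Ω → ℝ}
    (hX : Measurable[m] X) (hY : Measurable Y) {c : ℝ → ℝ}
    (h : ∀ x, μ[fun ω => if Y ω ≤ x then (1 : ℝ) else 0 | m] =ᵐ[μ] fun _ => c x) :
    μ[fun ω => if Y ω ≤ X ω then (1 : ℝ) else 0 | m] =ᵐ[μ] fun ω => cdf (μ.map Y) (X ω) := by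
  have hf : StronglyMeasurable fun z : ℝ × ℝ => if z.2 ≤ z.1 then (1 : ℝ) else 0 :=
    (Measurable.ite (measurableSet_le measurable_snd measurable_fst) measurable_const
      measurable_const).stronglyMeasurable
  refine (condExp_comp_prod_ae_eq_of_indep hm hX hY
    (indep_comap_of_condExp_ite_le_ae_eq_const hm hY h) hf (M := 1)
    fun z => by split_ifs <;> simp).trans (ae_of_all _ fun ω => ?_)
  exact integral_ite_le_eq_cdf_map hY (X ω)

end DistributionFunction

section ConditionalMean

variable {Ω : Type*} {m m0 : MeasurableSpace Ω} {μ : Measure Ω}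

theorem condExp_ae_eq_of_binary_flip [IsFiniteMeasure μ] (hm : m ≤ m0) {s s0 : Ω → ℝ}
    (hs : Measurable s) (hsval : ∀ ω, s ω = 0 ∨ s ω = 1) (hs0 : Integrable s0 μ) {p q : ℝ}
    (hp : μ[fun ω => (if s ω = 0 then (1 : ℝ) else 0) * s0 ω | m]
      =ᵐ[μ] fun ω => p * (μ[fun ω' => s0 ω' | m]) ω)
    (hq : μ[fun ω => s ω * (1 - s0 ω) | m]
      =ᵐ[μ] fun ω => q * (μ[fun ω' => 1 - s0 ω' | m]) ω) :
    μ[s | m] =ᵐ[μ] fun ω => (1 - p - q) * (μ[s0 | m]) ω + q := by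
  have hs_le : ∀ ω, ‖s ω‖ ≤ 1 := fun ω => by rcases hsval ω with h | h <;> simp [h]
  have hmiss : Integrable (fun ω => (if s ω = 0 then (1 : ℝ) else 0) * s0 ω) μ :=
    hs0.bdd_mul (c := 1) (Measurable.ite (hs (measurableSet_singleton 0)) measurable_const
      measurable_const |>.aestronglyMeasurable) (ae_of_all _ fun ω => by split_ifs <;> simp)
  have hfalse : Integrable (fun ω => s ω * (1 - s0 ω)) μ :=
    ((integrable_const 1).sub hs0).bdd_mul hs.aestronglyMeasurable (ae_of_all _ hs_le)
  have hdecomp : s = s0 - (fun ω => (if s ω = 0 then (1 : ℝ) else 0) * s0 ω)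
      + fun ω => s ω * (1 - s0 ω) := by
    funext ω
    rcases hsval ω with h | h <;> simp [h]
  have hcompl : μ[fun ω => 1 - s0 ω | m] =ᵐ[μ] fun ω => 1 - (μ[s0 | m]) ω := by
    filter_upwards [condExp_sub (integrable_const (1 : ℝ)) hs0 m] with ω h
    rw [show (fun ω => 1 - s0 ω) = (fun _ => (1 : ℝ)) - s0 from rfl, h, Pi.sub_apply,
      condExp_const hm]
  filter_upwards [condExp_add (hs0.sub hmiss) hfalse m, condExp_sub hs0 hmiss m, hp, hq,
    hcompl] with ω hadd hsub hmissω hfalseω hcomplω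
  rw [hdecomp, hadd, Pi.add_apply, hsub, Pi.sub_apply, hmissω, hfalseω, hcomplω]
  ring

theorem condExp_const_mul_sub_ae_eq (hm : m ≤ m0) [SigmaFinite (μ.trim hm)] {g h : Ω → ℝ}
    (hg : StronglyMeasurable[m] g) (hgi : Integrable g μ) (hh : Integrable h μ) (a : ℝ) :
    μ[fun ω => a * (g ω - h ω) | m] =ᵐ[μ] fun ω => a * (g ω - (μ[h | m]) ω) := by
  filter_upwards [condExp_smul (μ := μ) a (g - h) m, condExp_sub hgi hh m] with ω hsmul hsub
  rw [show (fun ω => a * (g ω - h ω)) = a • (g - h) from rfl, hsmul, Pi.smul_apply, hsub,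
    Pi.sub_apply, condExp_of_stronglyMeasurable hm hg hgi, smul_eq_mul]

end ConditionalMean

theorem grp_tb_kp_innovation_conditional_mean_general
    {Ω : Type*} {m0 : MeasurableSpace Ω} {μ : Measure Ω} [IsProbabilityMeasure μ]
    {d : ℕ} (ℱ : Filtration ℕ m0)
    (θ : EuclideanSpace ℝ (Fin d))
    (φ : ℕ → Ω → EuclideanSpace ℝ (Fin d))
    (hφmeas : ∀ k, StronglyMeasurable[ℱ k] (φ k))
    (w : ℕ → Ω → ℝ) (hwmeas : ∀ k, Measurable[ℱ k] (w k))
    (y : ℕ → Ω → ℝ) (hy : ∀ k ω, y (k + 1) ω = ⟪φ k ω, θ⟫ + w (k + 1) ω)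
    (C : ℝ) (s0 : ℕ → Ω → ℝ)
    (hs0 : ∀ k ω, s0 (k + 1) ω = if y (k + 1) ω ≤ C then 1 else 0)
    (p q : ℝ)
    (s : ℕ → Ω → ℝ)
    (hsmeas : ∀ k, Measurable[ℱ (k + 1)] (s (k + 1)))
    (hsval : ∀ k ω, s (k + 1) ω = 0 ∨ s (k + 1) ω = 1)
    (htamp_p : ∀ k,
      μ[fun ω => (if s (k + 1) ω = 0 then (1 : ℝ) else 0) * s0 (k + 1) ω | ℱ k]
        =ᵐ[μ] fun ω => p * (μ[fun ω' => s0 (k + 1) ω' | ℱ k]) ω)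
    (htamp_q : ∀ k,
      μ[fun ω => s (k + 1) ω * (1 - s0 (k + 1) ω) | ℱ k]
        =ᵐ[μ] fun ω => q * (μ[fun ω' => 1 - s0 (k + 1) ω' | ℱ k]) ω)
    (F : ℕ → ℝ → ℝ)
    (hF : ∀ k x, μ[fun ω => (if w (k + 1) ω ≤ x then (1 : ℝ) else 0) | ℱ k]
        =ᵐ[μ] fun _ => F k x)
    (β : ℝ)
    (θh : ℕ → Ω → EuclideanSpace ℝ (Fin d))
    (hθhmeas : ∀ k, StronglyMeasurable[ℱ k] (θh k)) :
    ∀ k : ℕ,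
      μ[fun ω => β * (1 - (p + q)) *
          ((1 - (p + q)) * F k (C - ⟪φ k ω, θh k ω⟫) + q - s (k + 1) ω) | ℱ k]
        =ᵐ[μ] fun ω => β * (1 - p - q) ^ 2 *
          (F k (C - ⟪φ k ω, θh k ω⟫) - F k (C - ⟪φ k ω, θ⟫)) := by
  intro k
  have hm := ℱ.le k
  have hw : Measurable (w (k + 1)) := (hwmeas (k + 1)).mono (ℱ.le _) le_rfl
  have hF_cdf : F k = cdf (μ.map (w (k + 1))) := funext fun x =>
    (integral_eq_of_condExp_ae_eq_const hm (hF k x)).symm.trans (integral_ite_le_eq_cdf_map hw x)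
  have hX : Measurable[ℱ k] fun ω => C - ⟪φ k ω, θ⟫ :=
    measurable_const.sub ((hφmeas k).inner stronglyMeasurable_const).measurable
  have hs0_eq : s0 (k + 1) = fun ω => if w (k + 1) ω ≤ C - ⟪φ k ω, θ⟫ then (1 : ℝ) else 0 :=
    funext fun ω => by simp only [hs0, hy, le_sub_iff_add_le']
  have hs0_int : Integrable (s0 (k + 1)) μ := hs0_eq ▸ integrable_ite_le (hX.mono hm le_rfl) hw
  have hs : Measurable (s (k + 1)) := (hsmeas k).mono (ℱ.le _) le_rfl
  have hs_int : Integrable (s (k + 1)) μ := .of_bound hs.aestronglyMeasurable 1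
    (ae_of_all _ fun ω => by rcases hsval k ω with h | h <;> simp [h])
  have hFθh : Measurable[ℱ k] fun ω => cdf (μ.map (w (k + 1))) (C - ⟪φ k ω, θh k ω⟫) :=
    (cdf _).mono.measurable.comp
      (measurable_const.sub ((hφmeas k).inner (hθhmeas k)).measurable)
  have hFθh_int : Integrable (fun ω => cdf (μ.map (w (k + 1))) (C - ⟪φ k ω, θh k ω⟫)) μ :=
    .of_bound (hFθh.mono hm le_rfl).aestronglyMeasurable 1 (ae_of_all _ fun ω => by
      simp [abs_of_nonneg (cdf_nonneg _ _), cdf_le_one])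
  rw [hF_cdf]
  filter_upwards [condExp_const_mul_sub_ae_eq hm
      ((hFθh.const_mul _).add_const q).stronglyMeasurable
      ((hFθh_int.const_mul _).add (integrable_const q)) hs_int (β * (1 - (p + q))),
    condExp_ae_eq_of_binary_flip hm hs (hsval k) hs0_int (htamp_p k) (htamp_q k),
    hs0_eq ▸ condExp_ite_le_ae_eq_cdf_map hm hX hw (hF k)] with ω hE_innov hE_s hE_s0
  rw [hE_innov, hE_s, hE_s0]
  ring

/-- equation (25) of the paper.
For the GRP-TB-KP innovation
`s̃_{k+1} = β(1−(p+q))((1−(p+q))F_k(C − θ̂_kᵀφ_k) + q − s_{k+1})`, with `θ̂_k`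
being `ℱ_k`-measurable, one has a.s.
`E[s̃_{k+1} | ℱ_k] = β(1−p−q)² (F_k(C − φ_kᵀθ̂_k) − F_k(C − φ_kᵀθ))`. -/
theorem grp_tb_kp_innovation_conditional_mean
    {Ω : Type*} {m0 : MeasurableSpace Ω} {μ : Measure Ω} [IsProbabilityMeasure μ]
    {d : ℕ} (ℱ : Filtration ℕ m0)
    (θ : EuclideanSpace ℝ (Fin d))
    (φ : ℕ → Ω → EuclideanSpace ℝ (Fin d))
    (hφmeas : ∀ k, StronglyMeasurable[ℱ k] (φ k))
    (w : ℕ → Ω → ℝ) (hwmeas : ∀ k, Measurable[ℱ k] (w k))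
    (y : ℕ → Ω → ℝ) (hy : ∀ k ω, y (k + 1) ω = ⟪φ k ω, θ⟫ + w (k + 1) ω)
    (C : ℝ) (s0 : ℕ → Ω → ℝ)
    (hs0 : ∀ k ω, s0 (k + 1) ω = if y (k + 1) ω ≤ C then 1 else 0)
    (p q : ℝ) (hp0 : 0 ≤ p) (hp1 : p < 1) (hq0 : 0 ≤ q) (hq1 : q < 1)
    (s : ℕ → Ω → ℝ)
    (hsmeas : ∀ k, Measurable[ℱ (k + 1)] (s (k + 1)))
    (hsval : ∀ k ω, s (k + 1) ω = 0 ∨ s (k + 1) ω = 1)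
    (htamp_p : ∀ k,
      μ[fun ω => (if s (k + 1) ω = 0 then (1 : ℝ) else 0) * s0 (k + 1) ω | ℱ k]
        =ᵐ[μ] fun ω => p * (μ[fun ω' => s0 (k + 1) ω' | ℱ k]) ω)
    (htamp_q : ∀ k,
      μ[fun ω => s (k + 1) ω * (1 - s0 (k + 1) ω) | ℱ k]
        =ᵐ[μ] fun ω => q * (μ[fun ω' => 1 - s0 (k + 1) ω' | ℱ k]) ω)
    (F : ℕ → ℝ → ℝ)
    (hF : ∀ k x, μ[fun ω => (if w (k + 1) ω ≤ x then (1 : ℝ) else 0) | ℱ k]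
        =ᵐ[μ] fun _ => F k x)
    (β : ℝ) (hβ : 0 < β)
    (θh : ℕ → Ω → EuclideanSpace ℝ (Fin d))
    (hθhmeas : ∀ k, StronglyMeasurable[ℱ k] (θh k)) :
    ∀ k : ℕ,
      μ[fun ω => β * (1 - (p + q)) *
          ((1 - (p + q)) * F k (C - ⟪φ k ω, θh k ω⟫) + q - s (k + 1) ω) | ℱ k]
        =ᵐ[μ] fun ω => β * (1 - p - q) ^ 2 *
          (F k (C - ⟪φ k ω, θh k ω⟫) - F k (C - ⟪φ k ω, θ⟫)) :=
  grp_tb_kp_innovation_conditional_mean_general ℱ θ φ hφmeas w hwmeas y hy C s0 hs0 p q s hsmeas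
    hsval htamp_p htamp_q F hF β θh hθhmeas
end
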